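/- arXiv:1505.01352 — 5 statements merged into one kernel-verified Lean document; each statement's English description precedes it below -/
import Mathlib

section
/- Let 𝒜 be a central S-ring over a finite group G and let m be an integer coprime to |G|. Then the map X ↦ X^{(m)} is a bijection of the set of basic sets 𝒮(𝒜) onto itself; in particular, for every basic set X of 𝒜, the set X^{(m)} is again a basic set of 𝒜. -/
/-!
Fix a prime `p ∤ |G|` and a basic set `X`. The element `ξ = X̲ ^ p` lies in `𝒜`, so its
coefficients are constant on basic sets and, `𝒜` being central, on conjugacy classes. Rotating
the `p`-letter words over `X` conjugates their product, so for every conjugacy class `C ∋ h`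
the count `|C| ξ(h)` of words with product in `C` is congruent mod `p` to the number of
constant words, `#{x ∈ X | x ^ p ∈ C}`. Since `p ∤ |C|`, an element `g'` in the basic set of
some `x₀ ^ p` (`x₀ ∈ X`) but outside `X^{(p)}` would give `p ∣ ξ(g') = ξ(x₀ ^ p)`, hence
`p ∣ |class of x₀|`. So `X^{(p)}` is a union of basic sets; as `x ↦ x ^ p` is a bijection, these
unions partition `G` into as many pieces as there are basic sets, so each is a basic set.
Writing `m mod |G|` as a product of such primes gives the theorem.
-/

open scoped Pointwise

/-- The sum `X̲ = ∑_{x ∈ X} x` of a subset `X` of `G`, as an element of the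
integral group ring `ℤG = MonoidAlgebra ℤ G`. -/
noncomputable def clsSum {G : Type*} [Group G] [DecidableEq G] (X : Finset G) : MonoidAlgebra ℤ G :=
  ∑ x ∈ X, MonoidAlgebra.single x 1

/-- A Schur ring (S-ring) over a finite group `G`: a partition `S` of `G` into nonempty
classes such that `{1} ∈ S`, `S` is closed under taking inverses of classes, and the
`ℤ`-span of the class sums is closed under multiplication (hence a subring of `ℤG`). -/
structure SRing (G : Type*) [Group G] [Fintype G] [DecidableEq G] where
  S : Finset (Finset G)
  nonempty_mem : ∀ X ∈ S, X.Nonempty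
  cover : ∀ g : G, ∃! X : Finset G, X ∈ S ∧ g ∈ X
  one_mem : ({1} : Finset G) ∈ S
  inv_mem : ∀ X ∈ S, X⁻¹ ∈ S
  mul_closed : ∀ ξ η : MonoidAlgebra ℤ G,
    ξ ∈ Submodule.span ℤ (clsSum '' (S : Set (Finset G))) →
    η ∈ Submodule.span ℤ (clsSum '' (S : Set (Finset G))) →
    ξ * η ∈ Submodule.span ℤ (clsSum '' (S : Set (Finset G)))

namespace SRing

variable {G : Type*} [Group G] [Fintype G] [DecidableEq G]

/-- The underlying `ℤ`-module of the S-ring `A` inside `ℤG`. -/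
noncomputable def span (A : SRing G) : Submodule ℤ (MonoidAlgebra ℤ G) :=
  Submodule.span ℤ (clsSum '' (A.S : Set (Finset G)))

/-- An S-ring is central if it is contained in the center of `ℤG`. -/
def IsCentral (A : SRing G) : Prop :=
  ∀ ξ ∈ A.span, ∀ η : MonoidAlgebra ℤ G, ξ * η = η * ξ

/-- A set `T ⊆ G` is an `A`-set if it is a union of basic sets of `A`. -/
def IsASet (A : SRing G) (T : Set G) : Prop :=
  ∀ X ∈ A.S, (∃ x ∈ X, x ∈ T) → ∀ x ∈ X, x ∈ T

/-- An S-ring is primitive if its only `A`-subgroups are trivial. -/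
def IsPrimitive (A : SRing G) : Prop :=
  ∀ H : Subgroup G, A.IsASet (H : Set G) → H = ⊥ ∨ H = ⊤

end SRing

open Finset

namespace Finset

variable {α : Type*} [DecidableEq α]

theorem card_modEq_card_filter_rotate_one_eq_self {p : ℕ} [Fact p.Prime]
    (T : Finset (List α)) (hlen : ∀ l ∈ T, l.length = p)
    (hrot : ∀ l ∈ T, l.rotate 1 ∈ T) : #T ≡ #{l ∈ T | l.rotate 1 = l} [MOD p] := by
  let f : Function.End T := fun l => ⟨l.1.rotate 1, hrot _ l.2⟩
  have hpow : ∀ (n : ℕ) (l : T), ((f ^ n) l).1 = l.1.rotate n := by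
    intro n
    induction n with
    | zero => intro l; exact (List.rotate_zero l.1).symm
    | succ n ih =>
      intro l
      rw [pow_succ]
      exact (ih (f l)).trans (by rw [List.rotate_rotate, add_comm])
  have hf : f ^ p ^ 1 = 1 := by
    refine funext fun l => Subtype.ext ?_
    rw [pow_one, hpow, ← hlen _ l.2, List.rotate_length]
    rfl
  have hfix : Fintype.card f.fixedPoints = #{l ∈ T | l.rotate 1 = l} := by
    rw [← Fintype.card_coe]
    refine Fintype.card_congr ((Equiv.subtypeEquivRight fun l => ?_).trans
      (Equiv.subtypeSubtypeEquivSubtypeInter (· ∈ T) (fun l => l.rotate 1 = l)) |>.trans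
      (Equiv.subtypeEquivRight fun l => by rw [Finset.mem_filter]))
    exact Subtype.ext_iff
  simpa [hfix] using Equiv.Perm.card_fixedPoints_modEq hf

def wordsOfLength (s : Finset α) (k : ℕ) : Finset (List α) :=
  (Fintype.piFinset fun _ : Fin k => s).image List.ofFn

theorem mem_wordsOfLength {s : Finset α} {k : ℕ} {l : List α} :
    l ∈ s.wordsOfLength k ↔ l.length = k ∧ ∀ x ∈ l, x ∈ s := by
  simp only [wordsOfLength, mem_image, Fintype.mem_piFinset]
  constructor
  · rintro ⟨v, hv, rfl⟩
    exact ⟨List.length_ofFn, fun x hx => by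
      obtain ⟨i, rfl⟩ := List.mem_ofFn.1 hx
      exact hv i⟩
  · rintro ⟨rfl, hl⟩
    exact ⟨fun i => l[i], fun i => hl _ (List.getElem_mem _), List.ofFn_getElem⟩

theorem sum_pow_eq_sum_wordsOfLength {R : Type*} [Semiring R] (s : Finset α) (f : α → R)
    (k : ℕ) : (∑ i ∈ s, f i) ^ k = ∑ l ∈ s.wordsOfLength k, (l.map f).prod := by
  rw [wordsOfLength, sum_image fun _ _ _ _ h => List.ofFn_injective h]
  simp only [List.map_ofFn, Function.comp_def]
  induction k with
  | zero => simp
  | succ k ih =>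
    have hpi := filter_piFinset_eq_map_consEquiv (fun _ : Fin (k + 1) => s) (fun _ => True)
    simp only [filter_true] at hpi
    rw [pow_succ', ih, sum_mul_sum, ← sum_product', hpi, sum_map]
    refine sum_congr rfl fun q _ => ?_
    simp [List.ofFn_succ]

end Finset

theorem isConj_prod_rotate_one {G : Type*} [Group G] (l : List G) :
    IsConj l.prod (l.rotate 1).prod := by
  cases l with
  | nil => rfl
  | cons a t => exact isConj_iff.2 ⟨a⁻¹, by simp⟩

theorem pow_injective_of_coprime_card {G : Type*} [Group G] [Fintype G] {k : ℕ}
    (hk : k.Coprime (Fintype.card G)) : Function.Injective fun x : G => x ^ k :=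
  (powCoprime (by rwa [Nat.card_eq_fintype_card, Nat.coprime_comm])).injective

theorem exists_isConj_pow_eq_of_isConj_pow {G : Type*} [Group G] {a b : G} {n : ℕ}
    (h : IsConj (a ^ n) b) : ∃ c, IsConj a c ∧ c ^ n = b := by
  obtain ⟨u, rfl⟩ := isConj_iff.1 h
  exact ⟨u * a * u⁻¹, isConj_iff.2 ⟨u, rfl⟩, conj_pow⟩

theorem isConj_pow_iff_of_injective {G : Type*} [Group G] {n : ℕ}
    (hinj : Function.Injective fun x : G => x ^ n) {a b : G} :
    IsConj (a ^ n) (b ^ n) ↔ IsConj a b := by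
  refine ⟨fun h => ?_, IsConj.pow n⟩
  obtain ⟨c, hac, hc⟩ := exists_isConj_pow_eq_of_isConj_pow h
  exact hinj hc ▸ hac

theorem card_filter_isConj_dvd {G : Type*} [Group G] [Fintype G] [DecidableEq G] (h : G) :
    #{d | IsConj h d} ∣ Fintype.card G := by
  have hcard : #{d | IsConj h d} = (MulAction.orbit (ConjAct G) h).ncard := by
    rw [← Set.ncard_coe_finset]
    congr 1
    ext d
    simp only [coe_filter, mem_univ, true_and, Set.mem_ofPred_eq, ConjAct.mem_orbit_conjAct]
    exact isConj_comm
  rw [hcard, ← MulAction.index_stabilizer, ← ConjAct.card, ← Nat.card_eq_fintype_card]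
  exact Subgroup.index_dvd_card _

section GroupRing

variable {G : Type*} [Group G] [DecidableEq G]

theorem card_filter_wordsOfLength_prod_mem_modEq {p : ℕ} [hp : Fact p.Prime] (X D : Finset G)
    (hD : ∀ a b, IsConj a b → a ∈ D → b ∈ D) :
    #{l ∈ X.wordsOfLength p | l.prod ∈ D} ≡ #{x ∈ X | x ^ p ∈ D} [MOD p] := by
  have hfix : {l ∈ {l ∈ X.wordsOfLength p | l.prod ∈ D} | l.rotate 1 = l} =
      {x ∈ X | x ^ p ∈ D}.image (List.replicate p) := by
    ext l
    simp only [mem_filter, mem_wordsOfLength, mem_image, List.rotate_one_eq_self_iff_eq_replicate]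
    constructor
    · rintro ⟨⟨⟨hlen, hlX⟩, hlD⟩, a, hl⟩
      rw [hlen] at hl
      subst hl
      refine ⟨a, ⟨hlX a (List.mem_replicate.2 ⟨hp.out.ne_zero, rfl⟩), ?_⟩, rfl⟩
      simpa using hlD
    · rintro ⟨x, ⟨hx, hxD⟩, rfl⟩
      simp_all
  have h := card_modEq_card_filter_rotate_one_eq_self {l ∈ X.wordsOfLength p | l.prod ∈ D}
    (fun l hl => (mem_wordsOfLength.1 (mem_filter.1 hl).1).1) fun l hl => by
      obtain ⟨hl, hlD⟩ := mem_filter.1 hl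
      obtain ⟨hlen, hlX⟩ := mem_wordsOfLength.1 hl
      exact mem_filter.2 ⟨mem_wordsOfLength.2 ⟨by simpa using hlen,
        fun x hx => hlX x (List.mem_rotate.1 hx)⟩, hD _ _ (isConj_prod_rotate_one l) hlD⟩
  rwa [hfix, card_image_of_injective _ (List.replicate_right_injective hp.out.ne_zero)] at h

theorem coeff_clsSum (X : Finset G) (g : G) :
    (clsSum X).coeff g = if g ∈ X then 1 else 0 := by
  simp [clsSum, MonoidAlgebra.coeff_sum, Finsupp.finsetSum_apply, Finsupp.single_apply]

theorem clsSum_pow (X : Finset G) (k : ℕ) :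
    clsSum X ^ k = ∑ l ∈ X.wordsOfLength k, MonoidAlgebra.single l.prod 1 := by
  rw [clsSum, sum_pow_eq_sum_wordsOfLength]
  refine sum_congr rfl fun l _ => ?_
  exact (map_list_prod (MonoidAlgebra.of ℤ G) l).symm

theorem sum_coeff_clsSum_pow (X D : Finset G) (k : ℕ) :
    ∑ d ∈ D, (clsSum X ^ k).coeff d = #{l ∈ X.wordsOfLength k | l.prod ∈ D} := by
  simp only [clsSum_pow, MonoidAlgebra.coeff_sum, Finsupp.finsetSum_apply,
    MonoidAlgebra.coeff_single, Finsupp.single_apply]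
  rw [sum_comm]
  simp [sum_ite_eq]

end GroupRing

namespace SRing

variable {G : Type*} [Group G] [Fintype G] [DecidableEq G] (A : SRing G)

theorem clsSum_mem_span {X : Finset G} (hX : X ∈ A.S) : clsSum X ∈ A.span :=
  Submodule.subset_span ⟨X, hX, rfl⟩

theorem pow_mem_span {ξ : MonoidAlgebra ℤ G} (hξ : ξ ∈ A.span) (k : ℕ) : ξ ^ k ∈ A.span := by
  induction k with
  | zero =>
    have h1 : clsSum ({1} : Finset G) = 1 := by simp [clsSum, MonoidAlgebra.one_def]
    simpa [h1] using A.clsSum_mem_span A.one_mem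
  | succ k ih => exact pow_succ ξ k ▸ A.mul_closed _ _ ih hξ

theorem eq_of_mem_of_mem {Y Z : Finset G} (hY : Y ∈ A.S) (hZ : Z ∈ A.S) {a : G} (haY : a ∈ Y)
    (haZ : a ∈ Z) : Y = Z :=
  (A.cover a).unique ⟨hY, haY⟩ ⟨hZ, haZ⟩

theorem coeff_eq_of_mem_span {ξ : MonoidAlgebra ℤ G} (hξ : ξ ∈ A.span) {Y : Finset G}
    (hY : Y ∈ A.S) {a b : G} (ha : a ∈ Y) (hb : b ∈ Y) : ξ.coeff a = ξ.coeff b := by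
  induction hξ using Submodule.span_induction with
  | mem _ hx =>
    obtain ⟨Z, hZ, rfl⟩ := hx
    have hiff : a ∈ Z ↔ b ∈ Z :=
      ⟨fun haZ => A.eq_of_mem_of_mem hY hZ ha haZ ▸ hb,
        fun hbZ => A.eq_of_mem_of_mem hY hZ hb hbZ ▸ ha⟩
    simp only [coeff_clsSum, hiff]
  | zero => rfl
  | add _ _ _ _ hx hy => simp only [MonoidAlgebra.coeff_add, Finsupp.add_apply, hx, hy]
  | smul _ _ _ hx => simp only [MonoidAlgebra.coeff_smul_apply, hx]

theorem image_mem_of_isASet {σ : G → G} (hσ : Function.Injective σ)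
    (hσA : ∀ X ∈ A.S, A.IsASet (X.image σ)) {X : Finset G} (hX : X ∈ A.S) :
    X.image σ ∈ A.S := by
  have hdisj : ∀ {X X'}, X ∈ A.S → X' ∈ A.S → ∀ {y}, y ∈ X.image σ → y ∈ X'.image σ →
      X = X' := by
    intro X X' hX hX' y hy hy'
    obtain ⟨x, hx, rfl⟩ := mem_image.1 hy
    obtain ⟨x', hx', hxx'⟩ := mem_image.1 hy'
    exact A.eq_of_mem_of_mem hX hX' hx (hσ hxx' ▸ hx')
  have hsub : ∀ X ∈ A.S, ∃ Z ∈ A.S, Z ⊆ X.image σ := by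
    intro X hX
    obtain ⟨x, hx⟩ := A.nonempty_mem X hX
    obtain ⟨Z, ⟨hZ, hxZ⟩, -⟩ := A.cover (σ x)
    exact ⟨Z, hZ, fun z hz => hσA X hX Z hZ ⟨σ x, hxZ, mem_image_of_mem σ hx⟩ z hz⟩
  choose f hfS hfsub using hsub
  have hsurj := surj_on_of_inj_on_of_card_le f hfS (fun X X' hX hX' hff => by
      obtain ⟨z, hz⟩ := A.nonempty_mem _ (hfS X hX)
      exact hdisj hX hX' (hfsub X hX hz) (hfsub X' hX' (hff ▸ hz))) le_rfl
  suffices X.image σ = f X hX from this ▸ hfS X hX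
  refine Subset.antisymm (fun y hy => ?_) (hfsub X hX)
  obtain ⟨Z, ⟨hZ, hyZ⟩, -⟩ := A.cover y
  obtain ⟨X', hX', rfl⟩ := hsurj Z hZ
  obtain rfl := hdisj hX hX' hy (hfsub X' hX' hyZ)
  exact hyZ

namespace IsCentral

variable {A}

theorem coeff_eq_of_isConj (hA : A.IsCentral) {ξ : MonoidAlgebra ℤ G} (hξ : ξ ∈ A.span)
    {a b : G} (hab : IsConj a b) : ξ.coeff a = ξ.coeff b := by
  obtain ⟨c, rfl⟩ := isConj_iff.1 hab
  have h := congrArg (fun η : MonoidAlgebra ℤ G => η.coeff (c * a))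
    (hA ξ hξ (MonoidAlgebra.single c 1))
  simpa using h.symm

theorem mem_of_isConj (hA : A.IsCentral) {X : Finset G} (hX : X ∈ A.S) {a b : G}
    (hab : IsConj a b) (ha : a ∈ X) : b ∈ X := by
  have h := hA.coeff_eq_of_isConj (A.clsSum_mem_span hX) hab
  simp only [coeff_clsSum, ha, if_true] at h
  by_contra hb
  simp [hb] at h

theorem card_isConj_mul_coeff_clsSum_pow (hA : A.IsCentral) {X : Finset G} (hX : X ∈ A.S)
    (p : ℕ) [Fact p.Prime] (h : G) :
    (#{d | IsConj h d} * (clsSum X ^ p).coeff h : ZMod p) = #{x ∈ X | IsConj h (x ^ p)} := by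
  have hsum : ∑ d ∈ {d | IsConj h d}, (clsSum X ^ p).coeff d =
      #{d | IsConj h d} * (clsSum X ^ p).coeff h := by
    rw [sum_congr rfl fun d hd => (hA.coeff_eq_of_isConj (A.pow_mem_span (A.clsSum_mem_span hX) p)
      (mem_filter.1 hd).2).symm, sum_const, nsmul_eq_mul]
  have hmod := card_filter_wordsOfLength_prod_mem_modEq (p := p) X {d | IsConj h d} fun a b hab ha => by
    simp only [mem_filter, mem_univ, true_and] at ha ⊢
    exact ha.trans hab
  rw [sum_coeff_clsSum_pow] at hsum
  simp only [mem_filter, mem_univ, true_and] at hmod hsum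
  rw [← (ZMod.natCast_eq_natCast_iff _ _ _).2 hmod]
  exact_mod_cast (congrArg (Int.cast : ℤ → ZMod p) hsum).symm

theorem isASet_image_pow_prime (hA : A.IsCentral) {p : ℕ} (hp : p.Prime)
    (hpG : ¬ p ∣ Fintype.card G) {X : Finset G} (hX : X ∈ A.S) :
    A.IsASet (X.image (· ^ p)) := by
  have := Fact.mk hp
  have hinj := pow_injective_of_coprime_card (G := G) (hp.coprime_iff_not_dvd.2 hpG)
  have hcount := hA.card_isConj_mul_coeff_clsSum_pow hX p
  have hclass : ∀ h : G, (#{d | IsConj h d} : ZMod p) ≠ 0 := fun h hzero =>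
    hpG (((ZMod.natCast_eq_zero_iff _ _).1 hzero).trans (card_filter_isConj_dvd h))
  rintro Y hY ⟨g, hgY, hg⟩ g' hg'Y
  obtain ⟨x₀, hx₀, rfl⟩ := mem_image.1 hg
  by_contra hg'
  have hempty : #{x ∈ X | IsConj g' (x ^ p)} = 0 := by
    refine card_eq_zero.2 (filter_eq_empty_iff.2 fun x hx hconj => hg' ?_)
    obtain ⟨c, hxc, rfl⟩ := exists_isConj_pow_eq_of_isConj_pow hconj.symm
    exact mem_image_of_mem _ (hA.mem_of_isConj hX hxc hx)
  have hfull : #{x ∈ X | IsConj (x₀ ^ p) (x ^ p)} = #{d | IsConj x₀ d} := by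
    congr 1
    ext x
    simp only [mem_filter, mem_univ, true_and, isConj_pow_iff_of_injective hinj]
    exact ⟨And.right, fun hx => ⟨hA.mem_of_isConj hX hx hx₀, hx⟩⟩
  have hzero : ((clsSum X ^ p).coeff g' : ZMod p) = 0 := by
    have := hcount g'
    rw [hempty, Nat.cast_zero, mul_eq_zero] at this
    exact this.resolve_left (hclass g')
  have := hcount (x₀ ^ p)
  rw [hfull, A.coeff_eq_of_mem_span (A.pow_mem_span (A.clsSum_mem_span hX) p) hY hgY hg'Y, hzero,
    mul_zero] at this
  exact hclass x₀ this.symm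

theorem image_pow_mem (hA : A.IsCentral) (k : ℕ)
    (hk : k.Coprime (Fintype.card G)) {X : Finset G} (hX : X ∈ A.S) :
    X.image (· ^ k) ∈ A.S := by
  induction k using Nat.recOnMul generalizing X with
  | zero => simpa [image_const (A.nonempty_mem X hX)] using A.one_mem
  | one => simpa using hX
  | prime p hp =>
    exact A.image_mem_of_isASet (pow_injective_of_coprime_card hk)
      (fun Y hY => hA.isASet_image_pow_prime hp (hp.coprime_iff_not_dvd.1 hk) hY) hX
  | mul a b iha ihb =>
    rw [Nat.coprime_mul_iff_left] at hk
    simpa [image_image, Function.comp_def, pow_mul] using ihb hk.2 (iha hk.1 hX)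

end IsCentral

end SRing

/-- **Schur's theorem on multipliers, part 1** (Theorem 1.2, first part).
If `𝒜` is a central S-ring over a finite group `G` and `m` is an integer coprime to `|G|`,
then `X ↦ X^{(m)} = {x^m : x ∈ X}` is a bijection of the set of basic sets of `𝒜` onto
itself; in particular every `X^{(m)}` is again a basic set. -/
theorem schur_multipliers_basic_sets {G : Type*} [Group G] [Fintype G] [DecidableEq G]
    (A : SRing G) (hA : A.IsCentral) (m : ℤ) (hm : Int.gcd m (Fintype.card G) = 1) :
    Set.BijOn (fun X : Finset G => X.image (fun x => x ^ m))
      (A.S : Set (Finset G)) (A.S : Set (Finset G)) := by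
  set k := (m % Fintype.card G).toNat
  have hkm : (k : ℤ) = m % Fintype.card G := Int.toNat_of_nonneg (Int.emod_nonneg m (by positivity))
  have hpow : ∀ x : G, x ^ m = x ^ k := fun x => by
    rw [← zpow_natCast, hkm, ← Nat.card_eq_fintype_card, zpow_mod_natCard]
  have hk : k.Coprime (Fintype.card G) := by
    rw [Nat.Coprime, ← Int.gcd_natCast_natCast, hkm, Int.gcd_emod, hm]
  simp only [hpow]
  exact (A.S.finite_toSet.injOn_iff_bijOn_of_mapsTo fun X hX => hA.image_pow_mem k hk hX).1
    (image_injective (pow_injective_of_coprime_card hk)).injOn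
end

section
/- Let G be a finite group, X a conjugacy class of G, and p any prime. Then in the group ring ℤG, the element X̲^p (the p-th power of the class sum) is a nonnegative integer linear combination ∑_Y a_Y Y̲ over the conjugacy classes Y of G, and for every conjugacy class Y one has: a_Y·|Y| ≡ |X| (mod p) if Y = X^{(p)}, and a_Y·|Y| ≡ 0 (mod p) if Y ≠ X^{(p)}. -/
open scoped Pointwise

/-- The conjugacy class of `g` in `G`, as a finset. -/
def conjClass {G : Type*} [Group G] [Fintype G] [DecidableEq G] (g : G) : Finset G :=
  Finset.univ.filter (fun h => ∃ c : G, c * g * c⁻¹ = h)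

/-!
The coefficient of `y` in `X̲^p` counts the tuples `(x₁, …, x_p) ∈ X^p` with `x₁ ⋯ x_p = y`.
Since `X̲` is central, these coefficients are constant on conjugacy classes, so `a_Y |Y|`
counts the tuples whose product lies in `Y`. Cyclically rotating a tuple conjugates its
product, so `ℤ/p` acts on these tuples; its fixed points are the constant tuples `(x, …, x)`
with `x ∈ X`, `x^p ∈ Y`, hence `a_Y |Y| ≡ #{x ∈ X | x^p ∈ Y} (mod p)`. As `X^{(p)}` is a single
class, this count is `|X|` for `Y = X^{(p)}` and `0` otherwise.
-/

open Finset Fintype MonoidAlgebra Equiv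

lemma MonoidAlgebra.coeff_conj_of_commute {R G : Type*} [Semiring R] [Group G] {x : R[G]}
    {c : G} (h : Commute (single c 1) x) (y : G) : x.coeff (c * y * c⁻¹) = x.coeff y := by
  simpa using (congr_arg (fun z : R[G] => z.coeff (c * y)) h.eq).symm

lemma piFinset_succ_eq_map_consEquiv {α : Type*} (X : Finset α) (n : ℕ) :
    piFinset (fun _ : Fin (n + 1) => X) =
      (X ×ˢ piFinset fun _ : Fin n => X).map (Fin.consEquiv fun _ => α).toEmbedding := by
  have h := filter_piFinset_eq_map_consEquiv (fun _ : Fin (n + 1) => X) fun _ => True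
  simp only [filter_true_of_mem fun _ _ => trivial] at h
  exact h

section Rotation

lemma isConj_prod_ofFn_comp_finRotate {G : Type*} [Group G] {n : ℕ} (f : Fin (n + 1) → G) :
    IsConj (List.ofFn f).prod (List.ofFn (f ∘ finRotate (n + 1))).prod := by
  rw [List.ofFn_succ, List.ofFn_succ']
  simp only [Function.comp_apply, finRotate_apply, Fin.coeSucc_eq_succ, Fin.last_add_one,
    List.prod_cons, List.prod_concat, isConj_iff]
  exact ⟨(f 0)⁻¹, by group⟩

lemma comp_finRotate_eq_self_iff {α : Type*} {n : ℕ} {f : Fin (n + 1) → α} :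
    f ∘ finRotate (n + 1) = f ↔ f = fun _ => f 0 := by
  refine ⟨fun h => funext fun i => ?_, fun h => by rw [h]; rfl⟩
  induction i using Fin.induction with
  | zero => rfl
  | succ i ih => rw [← ih, ← Fin.coeSucc_eq_succ, ← finRotate_apply]; exact congrFun h _

lemma orderOf_finRotate {n : ℕ} (hn : 2 ≤ n) : orderOf (finRotate n) = n := by
  rw [← Perm.lcm_cycleType, cycleType_finRotate_of_le hn]
  simp

lemma card_filter_comp_finRotate_eq_modEq {α : Type*} [DecidableEq α] {p : ℕ}
    [hp : Fact p.Prime] (s : Finset (Fin p → α)) (hs : ∀ f, f ∘ finRotate p ∈ s ↔ f ∈ s) :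
    #{f ∈ s | f ∘ finRotate p = f} ≡ #s [MOD p] := by
  let rot : Perm (Fin p → α) := MulAction.toPerm (DomMulAct.mk (finRotate p))
  have hrot : ∀ f, rot f ∈ s ↔ f ∈ s := hs
  let σ : Perm s := rot.subtypePerm hrot
  have hrot_pow : rot ^ p = 1 := by
    have h := pow_orderOf_eq_one (finRotate p)
    rw [orderOf_finRotate hp.out.two_le] at h
    change MulAction.toPermHom _ _ (DomMulAct.mk (finRotate p)) ^ p = 1
    rw [← map_pow, ← DomMulAct.mk_pow, h, DomMulAct.mk_one, map_one]
  have hσ_pow : σ ^ p ^ 1 = 1 := by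
    ext f : 2
    rw [pow_one, show σ = rot.subtypePerm hrot from rfl, Perm.subtypePerm_pow]
    simp [hrot_pow]
  have hσ_fix : ∀ f : s, σ f = f ↔ f.1 ∘ finRotate p = f.1 := fun _ => Subtype.ext_iff
  have hfix : #σ.supportᶜ = #{f ∈ s | f ∘ finRotate p = f} := by
    refine card_bij' (fun f _ => f.1) (fun f hf => ⟨f, (mem_filter.1 hf).1⟩) ?_ ?_ ?_ ?_
    · intro f hf
      rw [mem_compl, Perm.mem_support, not_not, hσ_fix] at hf
      exact mem_filter.2 ⟨f.2, hf⟩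
    · intro f hf
      rw [mem_compl, Perm.mem_support, not_not, hσ_fix]
      exact (mem_filter.1 hf).2
    · exact fun _ _ => rfl
    · exact fun _ _ => rfl
  simpa [hfix] using Perm.card_compl_support_modEq hσ_pow

theorem card_filter_prod_ofFn_modEq {G : Type*} [Group G] [DecidableEq G] (X : Finset G)
    {p : ℕ} [hp : Fact p.Prime] (P : G → Prop) [DecidablePred P]
    (hP : ∀ a b, IsConj a b → P a → P b) :
    #{f ∈ piFinset fun _ : Fin p => X | P (List.ofFn f).prod} ≡ #{x ∈ X | P (x ^ p)} [MOD p] := by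
  obtain ⟨n, rfl⟩ := Nat.exists_eq_succ_of_ne_zero hp.out.ne_zero
  set s := {f ∈ piFinset fun _ : Fin (n + 1) => X | P (List.ofFn f).prod}
  have hs : ∀ f, f ∘ finRotate (n + 1) ∈ s ↔ f ∈ s := by
    intro f
    have hconj := isConj_prod_ofFn_comp_finRotate f
    simp only [s, mem_filter, mem_piFinset, Function.comp_apply]
    exact and_congr ((finRotate (n + 1)).forall_congr_right (q := (f · ∈ X)))
      ⟨hP _ _ hconj.symm, hP _ _ hconj⟩
  have hconst : #{f ∈ s | f ∘ finRotate (n + 1) = f} = #{x ∈ X | P (x ^ (n + 1))} := by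
    refine card_bij' (fun f _ => f 0) (fun x _ _ => x) ?_ ?_ ?_ ?_
    · intro f hf
      simp only [s, mem_filter, mem_piFinset, comp_finRotate_eq_self_iff] at hf ⊢
      obtain ⟨⟨hX, hPf⟩, hf⟩ := hf
      rw [hf, List.ofFn_const, List.prod_replicate] at hPf
      exact ⟨hX 0, hPf⟩
    · intro x hx
      simp only [s, mem_filter, mem_piFinset] at hx ⊢
      rw [List.ofFn_const, List.prod_replicate]
      exact ⟨⟨fun _ => hx.1, hx.2⟩, rfl⟩
    · intro f hf
      simp only [mem_filter, comp_finRotate_eq_self_iff] at hf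
      exact hf.2.symm
    · exact fun _ _ => rfl
  rw [← hconst]
  exact (card_filter_comp_finRotate_eq_modEq s hs).symm

end Rotation

section ClassSums

variable {G : Type*} [Group G] [DecidableEq G]

lemma clsSum_pow_eq_sum_piFinset (X : Finset G) (n : ℕ) :
    clsSum X ^ n = ∑ f ∈ piFinset fun _ : Fin n => X, single (List.ofFn f).prod (1 : ℤ) := by
  induction n with
  | zero => simpa using MonoidAlgebra.one_def
  | succ n ih =>
    rw [pow_succ', ih, clsSum, Finset.sum_mul_sum, ← sum_product',
      piFinset_succ_eq_map_consEquiv, sum_map]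
    simp [single_mul_single]

lemma coeff_clsSum_pow (X : Finset G) (n : ℕ) (y : G) :
    (clsSum X ^ n).coeff y = #{f ∈ piFinset fun _ : Fin n => X | (List.ofFn f).prod = y} := by
  rw [clsSum_pow_eq_sum_piFinset, coeff_sum]
  simp [Finsupp.single_apply]

lemma sum_coeff_clsSum_pow_s7 (X : Finset G) (n : ℕ) (Y : Finset G) :
    ∑ y ∈ Y, (clsSum X ^ n).coeff y =
      #{f ∈ piFinset fun _ : Fin n => X | (List.ofFn f).prod ∈ Y} := by
  rw [card_eq_sum_card_fiberwise (f := fun f => (List.ofFn f).prod) (t := Y)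
    (s := {f ∈ piFinset fun _ : Fin n => X | (List.ofFn f).prod ∈ Y})
    fun f hf => (mem_filter.1 hf).2]
  push_cast
  refine sum_congr rfl fun y hy => ?_
  rw [coeff_clsSum_pow, filter_filter]
  congr 2
  exact filter_congr fun f _ => ⟨fun h => ⟨h ▸ hy, h⟩, And.right⟩

end ClassSums

section ConjClass

variable {G : Type*} [Group G] [Fintype G] [DecidableEq G]

lemma mem_conjClass {g h : G} : h ∈ conjClass g ↔ IsConj g h := by
  simp [conjClass, isConj_iff]

lemma conjClass_eq_of_isConj {g h : G} (hgh : IsConj g h) : conjClass g = conjClass h := by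
  ext z
  simp only [mem_conjClass]
  exact ⟨hgh.symm.trans, hgh.trans⟩

lemma image_pow_conjClass (g : G) (n : ℕ) :
    (conjClass g).image (· ^ n) = conjClass (g ^ n) := by
  ext z
  simp only [mem_image, mem_conjClass, isConj_iff]
  constructor
  · rintro ⟨x, ⟨c, rfl⟩, rfl⟩
    exact ⟨c, conj_pow.symm⟩
  · rintro ⟨c, rfl⟩
    exact ⟨c * g * c⁻¹, ⟨c, rfl⟩, conj_pow⟩

lemma conj_mem_conjClass_iff {g x : G} (c : G) :
    c * x * c⁻¹ ∈ conjClass g ↔ x ∈ conjClass g := by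
  have hconj : IsConj x (c * x * c⁻¹) := isConj_iff.2 ⟨c, rfl⟩
  simp only [mem_conjClass]
  exact ⟨fun h => h.trans hconj.symm, fun h => h.trans hconj⟩

lemma commute_single_clsSum_conjClass (g c : G) :
    Commute (single c (1 : ℤ)) (clsSum (conjClass g)) := by
  change _ = _
  rw [clsSum, Finset.mul_sum, Finset.sum_mul]
  refine sum_equiv (MulAut.conj c).toEquiv (fun x => (conj_mem_conjClass_iff c).symm) fun x _ => ?_
  simp [single_mul_single]

lemma coeff_clsSum_conjClass_pow_of_mem (g : G) (n : ℕ) {y z : G} (hz : z ∈ conjClass y) :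
    (clsSum (conjClass g) ^ n).coeff z = (clsSum (conjClass g) ^ n).coeff y := by
  obtain ⟨c, rfl⟩ := isConj_iff.1 (mem_conjClass.1 hz)
  exact coeff_conj_of_commute ((commute_single_clsSum_conjClass g c).pow_right n) y

lemma coeff_clsSum_conjClass_pow_mul_card (g : G) (n : ℕ) (y : G) :
    (clsSum (conjClass g) ^ n).coeff y * #(conjClass y) =
      #{f ∈ piFinset fun _ : Fin n => conjClass g | (List.ofFn f).prod ∈ conjClass y} := by
  rw [← sum_coeff_clsSum_pow_s7, sum_congr rfl fun z hz => coeff_clsSum_conjClass_pow_of_mem g n hz,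
    sum_const, nsmul_eq_mul, mul_comm]

end ConjClass

/-- **Lemma 3.1**. Let `G` be a finite group, `X` a conjugacy class of `G` and `p` a prime.
Then `X̲^p` is a nonnegative integer linear combination of class sums: its coefficients
are nonnegative and constant on conjugacy classes, and, writing `a_Y` for the coefficient
on the class `Y`, we have `a_Y⬝|Y| ≡ |X| (mod p)` if `Y = X^{(p)}` and
`a_Y⬝|Y| ≡ 0 (mod p)` otherwise. -/
theorem classSum_pow_prime {G : Type*} [Group G] [Fintype G] [DecidableEq G]
    (X : Finset G) (hX : ∃ g : G, X = conjClass g) (p : ℕ) (hp : p.Prime) :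
    (∀ y : G, 0 ≤ (clsSum X ^ p).coeff y) ∧
    (∀ y : G, ∀ z ∈ conjClass y, (clsSum X ^ p).coeff z = (clsSum X ^ p).coeff y) ∧
    (∀ y : G, conjClass y = X.image (fun x => x ^ p) →
      ((clsSum X ^ p).coeff y * (conjClass y).card : ℤ) ≡ (X.card : ℤ) [ZMOD (p : ℤ)]) ∧
    (∀ y : G, conjClass y ≠ X.image (fun x => x ^ p) →
      ((clsSum X ^ p).coeff y * (conjClass y).card : ℤ) ≡ 0 [ZMOD (p : ℤ)]) := by
  obtain ⟨g, rfl⟩ := hX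
  have : Fact p.Prime := ⟨hp⟩
  have key (y : G) : ((clsSum (conjClass g) ^ p).coeff y * #(conjClass y) : ℤ) ≡
      #{x ∈ conjClass g | x ^ p ∈ conjClass y} [ZMOD p] := by
    rw [coeff_clsSum_conjClass_pow_mul_card]
    exact Int.natCast_modEq_iff.2 <| card_filter_prod_ofFn_modEq _ _
      fun a b hab ha => mem_conjClass.2 ((mem_conjClass.1 ha).trans hab)
  refine ⟨fun y => ?_, fun y z => coeff_clsSum_conjClass_pow_of_mem g p, fun y hy => ?_,
    fun y hy => ?_⟩
  · rw [coeff_clsSum_pow]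
    positivity
  · simpa only [filter_true_of_mem fun x hx => hy ▸ mem_image_of_mem _ hx] using key y
  · have hpow (x) (hx : x ∈ conjClass g) : x ^ p ∉ conjClass y := fun hxy =>
      hy <| Eq.symm <| (image_pow_conjClass g p).trans <| (conjClass_eq_of_isConj <|
        (mem_conjClass.1 hxy).trans ((mem_conjClass.1 hx).pow p).symm).symm
    simpa only [filter_false_of_mem hpow, Finset.card_empty, Nat.cast_zero] using key y
end

section
/- Let 𝒜 be a central S-ring over a finite group G and let tr(𝒜) be its rational closure. Then 𝒜 is primitive if and only if tr(𝒜) is primitive; equivalently, a subgroup H of G is an 𝒜-subgroup if and only if it is a tr(𝒜)-subgroup. -/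
open scoped Pointwise

open scoped Classical in
/-- The trace `tr(X)` of a subset `X ⊆ G`: the union of the sets
`X^{(m)} = {x^m : x ∈ X}` over all integers `m` coprime to `|G|`. -/
noncomputable def trSet {G : Type*} [Group G] [Fintype G] [DecidableEq G]
    (X : Finset G) : Finset G :=
  Finset.univ.filter (fun y => ∃ x ∈ X, ∃ m : ℤ, Int.gcd m (Fintype.card G) = 1 ∧ y = x ^ m)

/-- A set `T ⊆ G` is a `tr(𝒜)`-set if it is a union of the basic sets `tr(X)`,
`X ∈ 𝒮(𝒜)`, of the rational closure `tr(𝒜)`. -/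
def SRing.IsTrASet {G : Type*} [Group G] [Fintype G] [DecidableEq G]
    (A : SRing G) (T : Set G) : Prop :=
  ∀ X ∈ A.S, (∃ x ∈ trSet X, x ∈ T) → ∀ x ∈ trSet X, x ∈ T

lemma mem_of_zpow_mem {G : Type*} [Group G] [Fintype G]
    (x : G) (m : ℤ) (hm : Int.gcd m (Fintype.card G) = 1)
    (H : Subgroup G) (h : x ^ m ∈ H) : x ∈ H := by
  have hd : orderOf x ∣ Fintype.card G := orderOf_dvd_card
  have hc : Nat.Coprime m.natAbs (orderOf x) :=
    Nat.Coprime.coprime_dvd_right hd hm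
  have hc' : IsCoprime m (orderOf x : ℤ) := by
    rw [Int.isCoprime_iff_gcd_eq_one]
    simpa [Int.gcd] using hc
  obtain ⟨a, b, hab⟩ := hc'
  have hx : x = (x ^ m) ^ a := by
    have h1 : x ^ ((orderOf x : ℤ)) = 1 := by
      rw [zpow_natCast, pow_orderOf_eq_one]
    calc x = x ^ (a * m + b * (orderOf x : ℤ)) := by rw [hab, zpow_one]
    _ = (x ^ m) ^ a * (x ^ (orderOf x : ℤ)) ^ b := by
        rw [zpow_add, ← zpow_mul, ← zpow_mul, mul_comm a m, mul_comm b (orderOf x : ℤ)]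
    _ = (x ^ m) ^ a := by rw [h1, one_zpow, mul_one]
  rw [hx]
  exact H.zpow_mem h a

/-- **Proposition 3.2**. Let `𝒜` be a central S-ring over a finite group `G` and
`tr(𝒜)` its rational closure. Then `𝒜` is primitive if and only if `tr(𝒜)` is
primitive; equivalently, a subgroup `H ≤ G` is an `𝒜`-subgroup if and only if it is
a `tr(𝒜)`-subgroup. -/
theorem isPrimitive_iff_trace_isPrimitive {G : Type*} [Group G] [Fintype G] [DecidableEq G]
    (A : SRing G) (hA : A.IsCentral) :
    (A.IsPrimitive ↔ ∀ H : Subgroup G, A.IsTrASet (H : Set G) → H = ⊥ ∨ H = ⊤) ∧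
      ∀ H : Subgroup G, A.IsASet (H : Set G) ↔ A.IsTrASet (H : Set G) := by
  have mem_tr : ∀ (X : Finset G) (y : G),
      y ∈ trSet X ↔ ∃ x ∈ X, ∃ m : ℤ, Int.gcd m (Fintype.card G) = 1 ∧ y = x ^ m := by
    intro X y
    simp [trSet]
  have self_tr : ∀ (X : Finset G), ∀ x ∈ X, x ∈ trSet X := by
    intro X x hx
    rw [mem_tr]
    exact ⟨x, hx, 1, by simp, by simp⟩
  have key : ∀ H : Subgroup G, A.IsASet (H : Set G) ↔ A.IsTrASet (H : Set G) := by
    intro H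
    constructor
    · intro h X hX ⟨y, hy, hyH⟩ z hz
      rw [mem_tr] at hy hz
      obtain ⟨x, hxX, m, hm, rfl⟩ := hy
      obtain ⟨x', hx'X, m', hm', rfl⟩ := hz
      have hxH : x ∈ H := mem_of_zpow_mem x m hm H hyH
      have : x' ∈ (H : Set G) := h X hX ⟨x, hxX, hxH⟩ x' hx'X
      exact H.zpow_mem this m'
    · intro h X hX ⟨x, hxX, hxH⟩ z hz
      exact h X hX ⟨x, self_tr X x hxX, hxH⟩ z (self_tr X z hz)
  refine ⟨⟨fun hp H hH => hp H ((key H).mpr hH), fun hp H hH => hp H ((key H).mp hH)⟩, key⟩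
end

section
/- Let G be a finite group, p a prime dividing |G|, and suppose the Sylow p-subgroup P of G is normal and cyclic; let H be the unique subgroup of P of order p. If x ∈ G is such that the coset Hx is not contained in the conjugacy class x^G of x, then x centralizes P, i.e., x ∈ C_G(P). -/
/-- **Lemma 4.1**. Let `G` be a finite group, `p` a prime dividing `|G|`, and suppose
the Sylow `p`-subgroup `P` of `G` is normal and cyclic; let `H` be the (unique)
subgroup of `P` of order `p`. If `x ∈ G` is such that the coset `Hx` is not contained
in the conjugacy class `x^G`, then `x` centralizes `P`. -/
theorem mem_centralizer_of_coset_not_subset_conjClass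
    {G : Type*} [Group G] [Fintype G] [DecidableEq G]
    (p : ℕ) (hp : p.Prime) (hdvd : p ∣ Fintype.card G)
    (P : Sylow p G) (hnorm : (P : Subgroup G).Normal) (hcyc : IsCyclic ↥(P : Subgroup G))
    (H : Subgroup G) (hHP : H ≤ (P : Subgroup G)) (hH : Nat.card H = p)
    (x : G) (hx : ¬ ∀ h ∈ H, ∃ c : G, c * x * c⁻¹ = h * x) :
    x ∈ Subgroup.centralizer ((P : Subgroup G) : Set G) := by
  classical
  haveI := hnorm
  haveI : Fact p.Prime := ⟨hp⟩
  haveI : IsCyclic ↥(P : Subgroup G) := hcyc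
  by_contra hcent
  apply hx
  have hcomm : ∀ a b : ↥(P : Subgroup G), a * b = b * a := fun a b => by
    letI : CommGroup ↥(P : Subgroup G) := IsCyclic.commGroup
    exact mul_comm a b
  set ψ : MulAut ↥(P : Subgroup G) := MulAut.conjNormal x with hψ
  let f : ↥(P : Subgroup G) →* ↥(P : Subgroup G) :=
    MonoidHom.mk' (fun a => a * (ψ a)⁻¹) (by
      intro a b
      show a * b * (ψ (a * b))⁻¹ = a * (ψ a)⁻¹ * (b * (ψ b)⁻¹)
      rw [map_mul, mul_inv_rev, hcomm (ψ b)⁻¹ (ψ a)⁻¹]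
      simp only [mul_assoc]
      congr 1
      rw [← mul_assoc, hcomm b, mul_assoc])
  rw [Subgroup.mem_centralizer_iff] at hcent
  push_neg at hcent
  obtain ⟨g, hgP, hgx⟩ := hcent
  have hfg : f ⟨g, hgP⟩ ≠ 1 := by
    intro h
    apply hgx
    have h1 : (⟨g, hgP⟩ : ↥(P : Subgroup G)) = ψ ⟨g, hgP⟩ := by
      rw [← mul_inv_eq_one]; exact h
    have h2 := congrArg Subtype.val h1
    rw [hψ, MulAut.conjNormal_apply] at h2
    simp only at h2
    conv_lhs => rw [h2]
    group
  haveI : Nontrivial ↥f.range := by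
    refine ⟨⟨f ⟨g, hgP⟩, MonoidHom.mem_range.mpr ⟨_, rfl⟩⟩, 1, fun h => hfg ?_⟩
    have := Subtype.ext_iff.mp h
    simpa using this
  have hpP : IsPGroup p ↥(P : Subgroup G) := P.2
  have hprange : IsPGroup p ↥f.range := hpP.to_subgroup f.range
  obtain ⟨n, hn⟩ := (IsPGroup.iff_card).mp hprange
  have hn1 : n ≠ 0 := by
    intro h0
    rw [h0, pow_zero] at hn
    exact (Finite.one_lt_card (α := ↥f.range)).ne' hn
  have hdvd' : p ∣ Fintype.card ↥f.range := by
    rw [← Nat.card_eq_fintype_card, hn]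
    exact dvd_pow_self p hn1
  obtain ⟨c, hc⟩ := exists_prime_orderOf_dvd_card p hdvd'
  set c' : ↥(P : Subgroup G) := (c : ↥(P : Subgroup G)) with hc'
  have hc'range : c' ∈ f.range := c.2
  have hordc' : orderOf c' = p := by
    have h1 := orderOf_injective f.range.subtype Subtype.coe_injective c
    rw [hc] at h1
    exact h1
  have hcount : (Finset.univ.filter fun z : ↥(P : Subgroup G) => z ^ p = 1).card ≤ p :=
    IsCyclic.card_pow_eq_one_le hp.pos
  have hsub : (Subgroup.zpowers c' : Set ↥(P : Subgroup G)) ⊆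
      ↑(Finset.univ.filter fun z : ↥(P : Subgroup G) => z ^ p = 1) := by
    intro z hz
    simp only [Finset.coe_filter, Set.mem_setOf_eq, Finset.mem_univ, true_and]
    obtain ⟨k, rfl⟩ := Subgroup.mem_zpowers_iff.mp hz
    have h1 : c' ^ p = 1 := by
      have h2 := pow_orderOf_eq_one c'
      rwa [hordc'] at h2
    rw [← zpow_natCast, ← zpow_mul, mul_comm, zpow_mul, zpow_natCast, h1, one_zpow]
  have hcardzp : ((Subgroup.zpowers c' : Subgroup ↥(P : Subgroup G)) :
      Set ↥(P : Subgroup G)).toFinset.card = p := by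
    rw [Set.toFinset_card]
    simp only [SetLike.coe_sort_coe]
    rw [← Nat.card_eq_fintype_card, Nat.card_zpowers, hordc']
  have hT : ∀ z : ↥(P : Subgroup G), z ^ p = 1 → z ∈ Subgroup.zpowers c' := by
    intro z hz
    have hfin : ((Subgroup.zpowers c' : Subgroup ↥(P : Subgroup G)) :
        Set ↥(P : Subgroup G)).toFinset ⊆
        Finset.univ.filter fun z : ↥(P : Subgroup G) => z ^ p = 1 := by
      intro w hw
      rw [Set.mem_toFinset] at hw
      exact hsub hw
    have heq := Finset.eq_of_subset_of_card_le hfin (by rw [hcardzp]; exact hcount)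
    have hz' : z ∈ ((Subgroup.zpowers c' : Subgroup ↥(P : Subgroup G)) :
        Set ↥(P : Subgroup G)).toFinset := by
      rw [heq]; simp [hz]
    rwa [Set.mem_toFinset] at hz'
  intro h hh
  have hhP : h ∈ (P : Subgroup G) := hHP hh
  have hhp : (⟨h, hhP⟩ : ↥(P : Subgroup G)) ^ p = 1 := by
    have h1 : (⟨h, hh⟩ : ↥H) ^ p = 1 := by
      rw [← hH]; exact pow_card_eq_one'
    have h2 := congrArg Subtype.val h1
    rw [SubgroupClass.coe_pow] at h2
    exact Subtype.ext (by simpa using h2)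
  have hmem : (⟨h, hhP⟩ : ↥(P : Subgroup G)) ∈ f.range :=
    (Subgroup.zpowers_le.mpr hc'range) (hT _ hhp)
  obtain ⟨a, ha⟩ := hmem
  refine ⟨(a : G), ?_⟩
  have h3 := congrArg Subtype.val ha
  simp only [f, MonoidHom.mk'_apply, Subgroup.coe_mul, Subgroup.coe_inv, hψ,
    MulAut.conjNormal_apply] at h3
  rw [← h3]
  group
end

section
/- Let G be a nontrivial finite group and let X be a nonempty subset of G ∖ {e} such that X⁻¹ = (G ∖ {e}) ∖ X and, in the group ring ℤG, X̲·X⁻¹̲ = |X|·e + ((|X|−1)/2)·(X̲ + X⁻¹̲). Then the partition {{e}, X, X⁻¹} of G satisfies the S-ring axioms (its ℤ-span is a subring of ℤG), giving an S-ring of rank 3 over G, and this S-ring is primitive. -/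
open scoped Pointwise

section helpers
variable {G : Type*} [Group G] [Fintype G] [DecidableEq G]

lemma single_mul_clsSum_univ (x : G) :
    MonoidAlgebra.single x (1:ℤ) * clsSum (Finset.univ : Finset G) = clsSum Finset.univ := by
  unfold clsSum
  rw [Finset.mul_sum]
  refine Fintype.sum_bijective (fun y => x * y) (Group.mulLeft_bijective x) _ _ ?_
  intro y
  rw [MonoidAlgebra.single_mul_single, one_mul]

lemma clsSum_univ_mul_single (x : G) :
    clsSum (Finset.univ : Finset G) * MonoidAlgebra.single x (1:ℤ) = clsSum Finset.univ := by
  unfold clsSum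
  rw [Finset.sum_mul]
  refine Fintype.sum_bijective (fun y => y * x) (Group.mulRight_bijective x) _ _ ?_
  intro y
  rw [MonoidAlgebra.single_mul_single, one_mul]

lemma clsSum_mul_univ (Z : Finset G) :
    clsSum Z * clsSum (Finset.univ : Finset G) = (Z.card : ℤ) • clsSum Finset.univ := by
  rw [show clsSum Z = ∑ x ∈ Z, MonoidAlgebra.single x 1 from rfl, Finset.sum_mul]
  rw [Finset.sum_congr rfl (fun x _ => single_mul_clsSum_univ x), Finset.sum_const]
  simp

lemma univ_mul_clsSum (Z : Finset G) :
    clsSum (Finset.univ : Finset G) * clsSum Z = (Z.card : ℤ) • clsSum Finset.univ := by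
  rw [show clsSum Z = ∑ x ∈ Z, MonoidAlgebra.single x 1 from rfl, Finset.mul_sum]
  rw [Finset.sum_congr rfl (fun x _ => clsSum_univ_mul_single x), Finset.sum_const]
  simp

end helpers

/-- **Skew Hadamard difference sets give primitive S-rings of rank 3**
(Subsection 5.2). Let `G` be a nontrivial finite group and `X ⊆ G \ {e}` a nonempty
subset with `X⁻¹ = (G \ {e}) \ X` and `X̲·X⁻¹̲ = |X|·e + ((|X|−1)/2)·(X̲ + X⁻¹̲)`
in `ℤG` (i.e. `X` is a skew Hadamard difference set). Then `{{e}, X, X⁻¹}` is the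
basic-set partition of an S-ring of rank `3` over `G`, and this S-ring is primitive. -/
theorem skew_hadamard_primitive_sring {G : Type*} [Group G] [Fintype G] [DecidableEq G]
    (hG : Nontrivial G) (X : Finset G) (hne : X.Nonempty) (h1 : (1 : G) ∉ X)
    (hinv : X⁻¹ = (Finset.univ \ {1} : Finset G) \ X)
    (heq : clsSum X * clsSum X⁻¹ =
      (X.card : ℤ) • (1 : MonoidAlgebra ℤ G) +
        (((X.card : ℤ) - 1) / 2) • (clsSum X + clsSum X⁻¹)) :
    ∃ A : SRing G, A.S = ({({1} : Finset G), X, X⁻¹} : Finset (Finset G)) ∧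
      A.S.card = 3 ∧ A.IsPrimitive := by
  classical
  -- characterization of membership in X⁻¹
  have hmemY : ∀ a : G, a ∈ X⁻¹ ↔ a ≠ 1 ∧ a ∉ X := by
    intro a; rw [hinv]; simp
  have hYne : (X⁻¹ : Finset G).Nonempty := by
    obtain ⟨x, hx⟩ := hne
    exact ⟨x⁻¹, by rwa [Finset.mem_inv', inv_inv]⟩
  -- distinctness of classes
  have h1X : ({1} : Finset G) ≠ X := fun h => h1 (h ▸ Finset.mem_singleton_self 1)
  have h1Y : ({1} : Finset G) ≠ X⁻¹ := by
    intro h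
    have : (1:G) ∈ X⁻¹ := h ▸ Finset.mem_singleton_self 1
    exact ((hmemY 1).1 this).1 rfl
  have hXY : X ≠ X⁻¹ := by
    obtain ⟨x, hx⟩ := hne
    intro h
    exact ((hmemY x).1 (h ▸ hx)).2 hx
  -- clsSum of {1} is 1
  have hone : clsSum ({1} : Finset G) = 1 := by
    simp [clsSum, MonoidAlgebra.one_def]
  set a := clsSum X with ha
  set b := clsSum X⁻¹ with hbdef
  set g := clsSum (Finset.univ : Finset G) with hgdef
  have hXsub : X ⊆ Finset.univ \ {1} := by
    intro x hx
    simp only [Finset.mem_sdiff, Finset.mem_univ, Finset.mem_singleton, true_and]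
    exact fun h => h1 (h ▸ hx)
  have hsum : b + a + 1 = g := by
    rw [hbdef, ha, hinv, hgdef, ← hone]
    unfold clsSum
    rw [Finset.sum_sdiff hXsub]
    rw [show (Finset.univ \ {1} : Finset G) = Finset.univ \ ({1} : Finset G) from rfl]
    rw [Finset.sum_sdiff (Finset.subset_univ _)]
  have hb : b = g - 1 - a := by rw [← hsum]; abel
  have hag : a * g = (X.card : ℤ) • g := clsSum_mul_univ X
  have hga : g * a = (X.card : ℤ) • g := univ_mul_clsSum X
  have hbg : b * g = ((X⁻¹ : Finset G).card : ℤ) • g := clsSum_mul_univ X⁻¹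
  -- commutation
  have hba : b * a = a * b := by
    calc b * a = (g - 1 - a) * a := by rw [← hb]
      _ = g * a - 1 * a - a * a := by rw [sub_mul, sub_mul]
      _ = a * g - a * 1 - a * a := by rw [hga, hag, one_mul, mul_one]
      _ = a * (g - 1 - a) := by rw [mul_sub, mul_sub]
      _ = a * b := by rw [← hb]
  have haa : a * a = (X.card : ℤ) • g - a - a * b := by
    have h' : a * b = (X.card : ℤ) • g - a - a * a := by
      calc a * b = a * (g - 1 - a) := by rw [← hb]
        _ = a * g - a * 1 - a * a := by rw [mul_sub, mul_sub]
        _ = (X.card : ℤ) • g - a - a * a := by rw [hag, mul_one]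
    rw [h']; abel
  have hbb : b * b = ((X⁻¹ : Finset G).card : ℤ) • g - b - b * a := by
    calc b * b = b * (g - 1 - a) := by rw [← hb]
      _ = b * g - b * 1 - b * a := by rw [mul_sub, mul_sub]
      _ = ((X⁻¹ : Finset G).card : ℤ) • g - b - b * a := by rw [hbg, mul_one]
  -- the span
  set sp : Submodule ℤ (MonoidAlgebra ℤ G) :=
    Submodule.span ℤ (clsSum '' ((({({1} : Finset G), X, X⁻¹} : Finset (Finset G))) : Set (Finset G))) with hsp
  have himg : (clsSum '' ((({({1} : Finset G), X, X⁻¹} : Finset (Finset G))) : Set (Finset G)))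
      = {1, a, b} := by
    simp [Set.image_insert_eq, hone, ha, hbdef]
  have h1mem : (1 : MonoidAlgebra ℤ G) ∈ sp := by
    rw [hsp, himg]; exact Submodule.subset_span (by simp)
  have hamem : a ∈ sp := by
    rw [hsp, himg]; exact Submodule.subset_span (by simp)
  have hbmem : b ∈ sp := by
    rw [hsp, himg]; exact Submodule.subset_span (by simp)
  have hgmem : g ∈ sp := by
    rw [← hsum]; exact Submodule.add_mem _ (Submodule.add_mem _ hbmem hamem) h1mem
  have habmem : a * b ∈ sp := by
    rw [heq]
    exact Submodule.add_mem _ (Submodule.smul_mem _ _ h1mem)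
      (Submodule.smul_mem _ _ (Submodule.add_mem _ hamem hbmem))
  have hbamem : b * a ∈ sp := hba ▸ habmem
  have haamem : a * a ∈ sp := by
    rw [haa]
    exact Submodule.sub_mem _ (Submodule.sub_mem _ (Submodule.smul_mem _ _ hgmem) hamem) habmem
  have hbbmem : b * b ∈ sp := by
    rw [hbb]
    exact Submodule.sub_mem _ (Submodule.sub_mem _ (Submodule.smul_mem _ _ hgmem) hbmem) hbamem
  have hprodmem : ∀ u ∈ ({1, a, b} : Set (MonoidAlgebra ℤ G)),
      ∀ v ∈ ({1, a, b} : Set (MonoidAlgebra ℤ G)), u * v ∈ sp := by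
    rintro u hu v hv
    rcases hu with rfl | rfl | rfl <;> rcases hv with rfl | rfl | rfl <;>
      first
        | exact habmem | exact hbamem | exact haamem | exact hbbmem
        | simpa using h1mem | simpa using hamem | simpa using hbmem
  have hmul : ∀ ξ η : MonoidAlgebra ℤ G, ξ ∈ sp → η ∈ sp → ξ * η ∈ sp := by
    intro ξ η hξ hη
    have hmm : ξ * η ∈ sp * sp := Submodule.mul_mem_mul hξ hη
    rw [hsp, himg, Submodule.span_mul_span] at hmm
    refine Submodule.span_le.mpr ?_ hmm
    rintro z hz
    rw [Set.mem_mul] at hz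
    obtain ⟨u, hu, v, hv, rfl⟩ := hz
    exact hprodmem u hu v hv
  -- assemble the S-ring
  refine ⟨⟨({({1} : Finset G), X, X⁻¹} : Finset (Finset G)), ?_, ?_, ?_, ?_, hmul⟩, rfl, ?_, ?_⟩
  · -- nonempty
    intro Z hZ
    simp only [Finset.mem_insert, Finset.mem_singleton] at hZ
    rcases hZ with rfl | rfl | rfl
    · exact ⟨1, Finset.mem_singleton_self 1⟩
    · exact hne
    · exact hYne
  · -- cover
    intro x
    by_cases hx1 : x = 1
    · refine ⟨{1}, ⟨by simp, by simp [hx1]⟩, ?_⟩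
      rintro Z ⟨hZ, hxZ⟩
      simp only [Finset.mem_insert, Finset.mem_singleton] at hZ
      rcases hZ with rfl | rfl | rfl
      · rfl
      · exact absurd hxZ (hx1 ▸ h1)
      · exact absurd ((hmemY x).1 hxZ).1 (by simp [hx1])
    · by_cases hxX : x ∈ X
      · refine ⟨X, ⟨by simp, hxX⟩, ?_⟩
        rintro Z ⟨hZ, hxZ⟩
        simp only [Finset.mem_insert, Finset.mem_singleton] at hZ
        rcases hZ with rfl | rfl | rfl
        · exact absurd (Finset.mem_singleton.1 hxZ) hx1
        · rfl
        · exact absurd hxX ((hmemY x).1 hxZ).2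
      · refine ⟨X⁻¹, ⟨by simp, (hmemY x).2 ⟨hx1, hxX⟩⟩, ?_⟩
        rintro Z ⟨hZ, hxZ⟩
        simp only [Finset.mem_insert, Finset.mem_singleton] at hZ
        rcases hZ with rfl | rfl | rfl
        · exact absurd (Finset.mem_singleton.1 hxZ) hx1
        · exact absurd hxZ hxX
        · rfl
  · -- one_mem
    simp
  · -- inv_mem
    intro Z hZ
    simp only [Finset.mem_insert, Finset.mem_singleton] at hZ ⊢
    rcases hZ with rfl | rfl | rfl
    · left; simp
    · right; right; rfl
    · right; left; rw [inv_inv]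
  · -- card = 3
    rw [Finset.card_insert_of_notMem (by simp [h1X, h1Y]),
        Finset.card_insert_of_notMem (by simp [hXY]), Finset.card_singleton]
  · -- primitivity
    intro H hH
    rcases H.bot_or_exists_ne_one with hbot | ⟨h, hhH, hh1⟩
    · exact Or.inl hbot
    · right
      have key : ∀ y : G, y ∈ H → y ∈ X → H = ⊤ := by
        intro y hyH hyX
        have hXsubH : ∀ x ∈ X, x ∈ (H : Set G) :=
          hH X (by simp) ⟨y, hyX, hyH⟩
        have hYsubH : ∀ x ∈ X⁻¹, x ∈ (H : Set G) := by
          intro x hx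
          have : x⁻¹ ∈ X := Finset.mem_inv'.1 hx
          have := hXsubH x⁻¹ this
          simpa using H.inv_mem this
        refine (Subgroup.eq_top_iff' H).mpr fun x => ?_
        by_cases hx1 : x = 1
        · exact hx1 ▸ H.one_mem
        · by_cases hxX : x ∈ X
          · exact hXsubH x hxX
          · exact hYsubH x ((hmemY x).2 ⟨hx1, hxX⟩)
      by_cases hhX : h ∈ X
      · exact key h hhH hhX
      · have hhY : h ∈ X⁻¹ := (hmemY h).2 ⟨hh1, hhX⟩
        exact key h⁻¹ (H.inv_mem hhH) (Finset.mem_inv'.1 hhY)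
end
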